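/- arXiv:1012.5548 — 2 statements merged into one kernel-verified Lean document; each statement's English description precedes it below -/
import Mathlib

section
/- Let K be a non-archimedean local field of odd residue characteristic and Y ∈ sl₂(K) with all entries of positive valuation strictly greater than 0 (so that the Cayley transform converges). Then the Weyl discriminants agree: (tr c(Y))² − 4 = −4·det(Y)/(1 − det(Y)/4)²·(unit adjustment), and in particular |D_G(c(Y))| = |D_g(Y)| where D_g(Y) = −4·det(Y) for trace-zero Y and D_G(γ) = (tr γ)² − 4, and |·| is the normalized absolute value. -/
/-- For trace-zero `Y` with entries of positive valuation,
`(tr (c Y))² − 4 = (−4 det Y)/(1 + det Y/4)²`, and hence the discriminants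
`D_G(c Y) = (tr c Y)² − 4` and `D_g(Y) = −4 det Y` have the same valuation
(equivalently `|D_G(c Y)| = |D_g(Y)|`). -/
theorem cayley_discriminant
    (K : Type*) [Field K]
    (v : AddValuation K (WithTop ℤ)) (hv2 : v 2 = 0)
    (c : Matrix (Fin 2) (Fin 2) K → Matrix (Fin 2) (Fin 2) K)
    (hc : ∀ Z, c Z = (1 + (2 : K)⁻¹ • Z) * (1 - (2 : K)⁻¹ • Z)⁻¹)
    (Y : Matrix (Fin 2) (Fin 2) K) (htr : Matrix.trace Y = 0)
    (hY : ∀ i j, 0 < v (Y i j)) :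
    (Matrix.trace (c Y)) ^ 2 - 4 = (-4 * Y.det) / (1 + Y.det / 4) ^ 2 ∧
    v ((Matrix.trace (c Y)) ^ 2 - 4) = v (-4 * Y.det) := by
  have h2 : (2 : K) ≠ 0 := by
    intro h
    rw [h, AddValuation.map_zero] at hv2
    exact (WithTop.top_ne_zero hv2)
  have h4 : (4 : K) ≠ 0 := by
    intro h
    have : (2 : K) * 2 = 0 := by rw [← h]; norm_num
    exact h2 (by rcases mul_eq_zero.mp this with h | h <;> exact h)
  have hv4 : v 4 = 0 := by
    have : (4 : K) = 2 * 2 := by norm_num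
    rw [this, AddValuation.map_mul, hv2, add_zero]
  -- entries
  have hY11 : Y 1 1 = - Y 0 0 := by
    have := htr
    rw [Matrix.trace_fin_two] at this
    linear_combination this
  have hdet : Y.det = -(Y 0 0 * Y 0 0) - Y 0 1 * Y 1 0 := by
    rw [Matrix.det_fin_two, hY11]; ring
  -- valuation of det is positive
  have hvdet : 0 < v Y.det := by
    rw [hdet]
    refine lt_of_lt_of_le ?_ (AddValuation.map_sub v _ _)
    refine lt_min ?_ ?_
    · rw [AddValuation.map_neg, AddValuation.map_mul]
      exact lt_of_lt_of_le (hY 0 0) (le_add_of_nonneg_right (hY 0 0).le)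
    · rw [AddValuation.map_mul]
      exact lt_of_lt_of_le (hY 0 1) (le_add_of_nonneg_right (hY 1 0).le)
  have hvd4 : 0 < v (Y.det / 4) := by
    rw [AddValuation.map_div, hv4, sub_zero]; exact hvdet
  have hvD : v (1 + Y.det / 4) = 0 := by
    have h1 : v (1 : K) < v (Y.det / 4) := by
      rw [AddValuation.map_one]; exact hvd4
    rw [AddValuation.map_add_eq_of_lt_left v h1, AddValuation.map_one]
  have hDne : (1 + Y.det / 4) ≠ 0 := by
    intro h
    rw [h, AddValuation.map_zero] at hvD
    exact (WithTop.top_ne_zero hvD)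
  -- determinant of 1 - Y/2
  have hdetM : (1 - (2 : K)⁻¹ • Y).det = 1 + Y.det / 4 := by
    rw [Matrix.det_fin_two, hdet]
    simp only [Matrix.sub_apply, Matrix.smul_apply, Matrix.one_apply, smul_eq_mul]
    rw [hY11]
    field_simp
    simp only [zero_ne_one, one_ne_zero, ↓reduceIte]
    ring
  have hMne : (1 - (2 : K)⁻¹ • Y).det ≠ 0 := by rw [hdetM]; exact hDne
  -- trace of numerator * adjugate
  have hadj : Matrix.trace ((1 + (2 : K)⁻¹ • Y) * (1 - (2 : K)⁻¹ • Y).adjugate)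
      = 2 - Y.det / 2 := by
    rw [Matrix.trace_fin_two]
    simp only [Matrix.mul_apply, Fin.sum_univ_two, Matrix.smul_apply,
      Matrix.adjugate_fin_two, Matrix.add_apply, Matrix.sub_apply,
      Matrix.one_apply, Matrix.of_apply, Matrix.cons_val', Matrix.cons_val_zero,
      Matrix.cons_val_one, Matrix.head_cons, Matrix.head_fin_const,
      Matrix.empty_val', Matrix.cons_val_fin_one, smul_eq_mul]
    rw [hdet, hY11]
    field_simp
    simp only [zero_ne_one, one_ne_zero, ↓reduceIte]
    ring
  -- trace of c Y
  have htrc : Matrix.trace (c Y) = (2 - Y.det / 2) / (1 + Y.det / 4) := by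
    rw [hc, Matrix.inv_def, Ring.inverse_eq_inv', hdetM, Matrix.mul_smul,
      Matrix.trace_smul, hadj, smul_eq_mul]
    ring
  have heq : (Matrix.trace (c Y)) ^ 2 - 4 = (-4 * Y.det) / (1 + Y.det / 4) ^ 2 := by
    rw [htrc, div_pow, div_sub' (pow_ne_zero 2 hDne)]
    congr 1
    field_simp
    ring
  refine ⟨heq, ?_⟩
  rw [heq, AddValuation.map_div, AddValuation.map_pow, hvD]
  simp
end

section
/- Let K be a non-archimedean local field of odd residue cardinality q, with non-square unit ε and uniformizer ϖ. The diagonal split torus A ⊂ SL₂(K), the unramified elliptic torus T^ε = {[[a,b],[bε,a]] : a²−b²ε = 1}, and the ramified elliptic tori T^{ϖ,η} exhaust all SL₂(K)-conjugacy classes of maximal tori; in particular, every maximal K-torus of SL₂ is GL₂(K)-conjugate to exactly one of A, T^ε, T^ϖ, T^{εϖ}, according to the K-isomorphism class of its splitting field. -/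
open Matrix

private lemma conj_of_eq' {K : Type*} [Field K] {γ P M : Matrix (Fin 2) (Fin 2) K}
    (hP : IsUnit P.det) (h : γ * P = P * M) :
    ∃ u : (Matrix (Fin 2) (Fin 2) K)ˣ,
      (↑u : Matrix (Fin 2) (Fin 2) K) * γ * (↑u⁻¹ : Matrix (Fin 2) (Fin 2) K) = M := by
  obtain ⟨u, hu⟩ := (Matrix.isUnit_iff_isUnit_det P).mpr hP
  refine ⟨u⁻¹, ?_⟩
  rw [inv_inv]
  calc (↑u⁻¹ : Matrix (Fin 2) (Fin 2) K) * γ * ↑u = ↑u⁻¹ * (γ * P) := by rw [hu, mul_assoc]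
    _ = ↑u⁻¹ * (↑u * M) := by rw [h, hu]
    _ = M := by rw [← mul_assoc, Units.inv_mul, one_mul]

private lemma to_companion' {K : Type*} [Field K] (γ : Matrix (Fin 2) (Fin 2) K)
    (hdet : γ.det = 1) (hD : (Matrix.trace γ) ^ 2 - 4 ≠ 0) :
    ∃ u : (Matrix (Fin 2) (Fin 2) K)ˣ,
      (↑u : Matrix (Fin 2) (Fin 2) K) * γ * (↑u⁻¹ : Matrix (Fin 2) (Fin 2) K)
        = !![0, -1; 1, Matrix.trace γ] := by
  obtain ⟨p, q, r, s, rfl⟩ : ∃ p q r s, γ = !![p, q; r, s] :=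
    ⟨_, _, _, _, Matrix.eta_fin_two γ⟩
  have hd : p * s - q * r = 1 := by rw [Matrix.det_fin_two_of] at hdet; exact hdet
  have ht : Matrix.trace !![p, q; r, s] = p + s := Matrix.trace_fin_two_of p q r s
  rw [ht] at hD ⊢
  by_cases hr : r ≠ 0
  · apply conj_of_eq' (P := !![1, p; 0, r])
    · simp [Matrix.det_fin_two_of, hr]
    · ext i j
      fin_cases i <;> fin_cases j <;>
        simp [Matrix.mul_apply, Fin.sum_univ_two] <;>
        first | ring1 | linear_combination hd | linear_combination -hd
  push_neg at hr
  subst hr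
  by_cases hq : q ≠ 0
  · apply conj_of_eq' (P := !![0, q; 1, s])
    · simp [Matrix.det_fin_two_of, hq]
    · ext i j
      fin_cases i <;> fin_cases j <;>
        simp [Matrix.mul_apply, Fin.sum_univ_two] <;>
        first | ring1 | linear_combination hd | linear_combination -hd
  push_neg at hq
  subst hq
  have hps : p ≠ s := by
    intro h
    exact hD (by linear_combination 4 * hd + (p - s) * h)
  apply conj_of_eq' (P := !![1, p; 1, s])
  · simp [Matrix.det_fin_two_of, sub_ne_zero.mpr (Ne.symm hps)]
  · ext i j
    fin_cases i <;> fin_cases j <;>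
      simp [Matrix.mul_apply, Fin.sum_univ_two] <;>
      first | ring1 | linear_combination hd | linear_combination -hd

private lemma conj_trans' {K : Type*} [Field K] {γ M C : Matrix (Fin 2) (Fin 2) K}
    (u w : (Matrix (Fin 2) (Fin 2) K)ˣ)
    (hu : (↑u : Matrix (Fin 2) (Fin 2) K) * γ * (↑u⁻¹ : Matrix (Fin 2) (Fin 2) K) = C)
    (hw : (↑w : Matrix (Fin 2) (Fin 2) K) * M * (↑w⁻¹ : Matrix (Fin 2) (Fin 2) K) = C) :
    ∃ g : (Matrix (Fin 2) (Fin 2) K)ˣ,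
      (↑g : Matrix (Fin 2) (Fin 2) K) * γ * (↑g⁻¹ : Matrix (Fin 2) (Fin 2) K) = M := by
  refine ⟨w⁻¹ * u, ?_⟩
  have key : (↑u : Matrix (Fin 2) (Fin 2) K) * γ * (↑u⁻¹ : Matrix (Fin 2) (Fin 2) K)
      = (↑w : Matrix (Fin 2) (Fin 2) K) * M * (↑w⁻¹ : Matrix (Fin 2) (Fin 2) K) := hu.trans hw.symm
  rw [_root_.mul_inv_rev, inv_inv, Units.val_mul, Units.val_mul]
  calc (↑w⁻¹ : Matrix (Fin 2) (Fin 2) K) * ↑u * γ * ((↑u⁻¹ : Matrix (Fin 2) (Fin 2) K) * ↑w)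
      = ↑w⁻¹ * ((↑u : Matrix (Fin 2) (Fin 2) K) * γ * ↑u⁻¹) * ↑w := by noncomm_ring
    _ = ↑w⁻¹ * ((↑w : Matrix (Fin 2) (Fin 2) K) * M * ↑w⁻¹) * ↑w := by rw [key]
    _ = ((↑w⁻¹ : Matrix (Fin 2) (Fin 2) K) * ↑w) * M * ((↑w⁻¹ : Matrix (Fin 2) (Fin 2) K) * ↑w) := by
        noncomm_ring
    _ = M := by rw [Units.inv_mul, one_mul, mul_one]

/-- Conjugate a regular det-1 matrix onto any other matrix with the same trace & det. -/
private lemma conj_into' {K : Type*} [Field K] {γ M : Matrix (Fin 2) (Fin 2) K}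
    (hdet : γ.det = 1) (hD : (Matrix.trace γ) ^ 2 - 4 ≠ 0)
    (hMdet : M.det = 1) (hMtr : Matrix.trace M = Matrix.trace γ) :
    ∃ g : (Matrix (Fin 2) (Fin 2) K)ˣ,
      (↑g : Matrix (Fin 2) (Fin 2) K) * γ * (↑g⁻¹ : Matrix (Fin 2) (Fin 2) K) = M := by
  obtain ⟨u, hu⟩ := to_companion' γ hdet hD
  obtain ⟨w, hw⟩ := to_companion' M hMdet (by rw [hMtr]; exact hD)
  rw [hMtr] at hw
  exact conj_trans' u w hu hw

private lemma val_coe' {K : Type*} [Field K] (v : AddValuation K (WithTop ℤ)) {x : K}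
    (hx : x ≠ 0) : ∃ n : ℤ, v x = (n : WithTop ℤ) := by
  have h : v x ≠ ⊤ := by
    intro h
    have h1 : v (x * x⁻¹) = v x + v x⁻¹ := v.map_mul _ _
    rw [mul_inv_cancel₀ hx, v.map_one, h, top_add] at h1
    exact WithTop.zero_ne_top h1
  obtain ⟨n, hn⟩ := WithTop.ne_top_iff_exists.mp h
  exact ⟨n, hn.symm⟩

private lemma ne_zero_of_val' {K : Type*} [Field K] (v : AddValuation K (WithTop ℤ)) {x : K}
    {n : ℤ} (hx : v x = (n : WithTop ℤ)) : x ≠ 0 := by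
  rintro rfl
  rw [v.map_zero] at hx
  exact (WithTop.coe_ne_top (a := n)) hx.symm

private lemma not_sq_of_odd' {K : Type*} [Field K] (v : AddValuation K (WithTop ℤ)) {x : K}
    {n : ℤ} (hx : v x = (n : WithTop ℤ)) (hn : Odd n) : ¬ IsSquare x := by
  rintro ⟨c, rfl⟩
  have hc : c ≠ 0 := by
    rintro rfl
    rw [mul_zero, v.map_zero] at hx
    exact (WithTop.coe_ne_top (a := n)) hx.symm
  obtain ⟨m, hm⟩ := val_coe' v hc
  rw [v.map_mul, hm, ← WithTop.coe_add] at hx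
  have h : m + m = n := by exact_mod_cast hx
  exact (Int.not_even_iff_odd.mpr hn) ⟨m, h.symm⟩

private lemma sq_ratio' {K : Type*} [Field K] {D θ₁ θ₂ : K} (hD : D ≠ 0)
    (h₁ : θ₁ ≠ 0) (h₂ : θ₂ ≠ 0) (s₁ : IsSquare (D / θ₁)) (s₂ : IsSquare (D / θ₂)) :
    IsSquare (θ₁ * θ₂) := by
  obtain ⟨a, ha⟩ := s₁
  obtain ⟨b, hb⟩ := s₂
  rw [div_eq_iff h₁] at ha
  rw [div_eq_iff h₂] at hb
  have ha0 : a ≠ 0 := by rintro rfl; rw [mul_zero, zero_mul] at ha; exact hD ha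
  have hb0 : b ≠ 0 := by rintro rfl; rw [mul_zero, zero_mul] at hb; exact hD hb
  refine ⟨D / (a * b), ?_⟩
  rw [div_mul_div_comm, eq_div_iff (mul_ne_zero (mul_ne_zero ha0 hb0) (mul_ne_zero ha0 hb0))]
  linear_combination (-D) * hb + (-(b * b * θ₂)) * ha

/-- over a non-archimedean local field `K` of odd residue
characteristic, with square-class representatives `{1, ε, ϖ, εϖ}`, every regular
semisimple element of `SL₂(K)` is `GL₂(K)`-conjugate into exactly one of the four
standard tori: the diagonal split torus `A`, the unramified torus `T^ε`, and the
ramified tori `T^ϖ`, `T^{εϖ}`; i.e. these exhaust all conjugacy classes of maximal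
tori, classified by the splitting field. -/
theorem tori_classification
    (K : Type*) [Field K]
    (v : AddValuation K (WithTop ℤ)) (hv2 : v 2 = 0)
    (ε ϖ : K) (hεu : v ε = 0) (hε : ¬ IsSquare ε) (hϖ : v ϖ = 1)
    -- the square classes of `K×` are represented by `{1, ε, ϖ, εϖ}`
    (hsq : ∀ x : K, x ≠ 0 → ∃ θ ∈ ({1, ε, ϖ, ε * ϖ} : Set K), IsSquare (x / θ))
    (tori : Fin 4 → Set (Matrix (Fin 2) (Fin 2) K))
    (htori : tori = ![{M | ∃ a d : K, M = !![a, 0; 0, d]},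
      {M | ∃ a b : K, M = !![a, b; b * ε, a]},
      {M | ∃ a b : K, M = !![a, b; b * ϖ, a]},
      {M | ∃ a b : K, M = !![a, b; b * (ε * ϖ), a]}]) :
    ∀ γ : Matrix (Fin 2) (Fin 2) K, γ.det = 1 →
      (Matrix.trace γ) ^ 2 - 4 ≠ 0 →
      ∃! i : Fin 4, ∃ g : GL (Fin 2) K,
        (↑g : Matrix (Fin 2) (Fin 2) K) * γ * (↑g⁻¹ : Matrix (Fin 2) (Fin 2) K)
          ∈ tori i := by
  subst htori
  intro γ hdet hD
  have h2 : (2 : K) ≠ 0 := ne_zero_of_val' v (n := 0) (by exact_mod_cast hv2)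
  have hε0 : ε ≠ 0 := ne_zero_of_val' v (n := 0) (by exact_mod_cast hεu)
  have hϖ0 : ϖ ≠ 0 := ne_zero_of_val' v (n := 1) (by exact_mod_cast hϖ)
  have hθ0 : ∀ i : Fin 4, (![1, ε, ϖ, ε * ϖ] : Fin 4 → K) i ≠ 0 := by
    intro i
    fin_cases i
    · exact one_ne_zero
    · exact hε0
    · exact hϖ0
    · exact mul_ne_zero hε0 hϖ0
  -- non-square facts
  have Nϖ : ¬ IsSquare ϖ := not_sq_of_odd' v (n := 1) (by exact_mod_cast hϖ) ⟨0, by ring⟩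
  have Nεϖ : ¬ IsSquare (ε * ϖ) := by
    refine not_sq_of_odd' v (n := 1) ?_ ⟨0, by ring⟩
    rw [v.map_mul, hεu, hϖ, zero_add]
    rfl
  have N01 : ¬ IsSquare ((1 : K) * ε) := by rw [one_mul]; exact hε
  have N02 : ¬ IsSquare ((1 : K) * ϖ) := by rw [one_mul]; exact Nϖ
  have N03 : ¬ IsSquare ((1 : K) * (ε * ϖ)) := by rw [one_mul]; exact Nεϖ
  have N10 : ¬ IsSquare (ε * 1) := by rw [mul_one]; exact hε
  have N20 : ¬ IsSquare (ϖ * 1) := by rw [mul_one]; exact Nϖ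
  have N30 : ¬ IsSquare (ε * ϖ * 1) := by rw [mul_one]; exact Nεϖ
  have N21 : ¬ IsSquare (ϖ * ε) := by rw [mul_comm]; exact Nεϖ
  have N13 : ¬ IsSquare (ε * (ε * ϖ)) := by
    refine not_sq_of_odd' v (n := 1) ?_ ⟨0, by ring⟩
    rw [v.map_mul, v.map_mul, hεu, hϖ, zero_add, zero_add]
    rfl
  have N31 : ¬ IsSquare (ε * ϖ * ε) := by rw [mul_comm]; exact N13
  have N23 : ¬ IsSquare (ϖ * (ε * ϖ)) := by
    rintro ⟨c, hc⟩
    refine hε ⟨c / ϖ, ?_⟩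
    rw [div_mul_div_comm, eq_div_iff (mul_ne_zero hϖ0 hϖ0)]
    linear_combination hc
  have N32 : ¬ IsSquare (ε * ϖ * ϖ) := by rw [mul_comm]; exact N23
  -- invariance: membership forces the square class of the discriminant
  have inv : ∀ i : Fin 4, (∃ g : GL (Fin 2) K,
      (↑g : Matrix (Fin 2) (Fin 2) K) * γ * (↑g⁻¹ : Matrix (Fin 2) (Fin 2) K)
        ∈ (![{M | ∃ a d : K, M = !![a, 0; 0, d]},
            {M | ∃ a b : K, M = !![a, b; b * ε, a]},
            {M | ∃ a b : K, M = !![a, b; b * ϖ, a]},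
            {M | ∃ a b : K, M = !![a, b; b * (ε * ϖ), a]}] :
              Fin 4 → Set (Matrix (Fin 2) (Fin 2) K)) i) →
      IsSquare ((Matrix.trace γ ^ 2 - 4) / (![1, ε, ϖ, ε * ϖ] : Fin 4 → K) i) := by
    rintro i ⟨g, hg⟩
    have htr : Matrix.trace ((↑g : Matrix (Fin 2) (Fin 2) K) * γ *
        (↑g⁻¹ : Matrix (Fin 2) (Fin 2) K)) = Matrix.trace γ := Matrix.trace_units_conj g γ
    have hdt : Matrix.det ((↑g : Matrix (Fin 2) (Fin 2) K) * γ *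
        (↑g⁻¹ : Matrix (Fin 2) (Fin 2) K)) = 1 := by
      rw [Matrix.det_units_conj g γ]; exact hdet
    fin_cases i
    · obtain ⟨a, d, hM⟩ := hg
      rw [hM, Matrix.trace_fin_two_of] at htr
      rw [hM, Matrix.det_fin_two_of] at hdt
      show IsSquare ((Matrix.trace γ ^ 2 - 4) / 1)
      refine ⟨a - d, ?_⟩
      rw [div_one, ← htr]
      linear_combination 4 * hdt
    · obtain ⟨a, b, hM⟩ := hg
      rw [hM, Matrix.trace_fin_two_of] at htr
      rw [hM, Matrix.det_fin_two_of] at hdt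
      show IsSquare ((Matrix.trace γ ^ 2 - 4) / ε)
      refine ⟨2 * b, ?_⟩
      rw [div_eq_iff hε0, ← htr]
      linear_combination 4 * hdt
    · obtain ⟨a, b, hM⟩ := hg
      rw [hM, Matrix.trace_fin_two_of] at htr
      rw [hM, Matrix.det_fin_two_of] at hdt
      show IsSquare ((Matrix.trace γ ^ 2 - 4) / ϖ)
      refine ⟨2 * b, ?_⟩
      rw [div_eq_iff hϖ0, ← htr]
      linear_combination 4 * hdt
    · obtain ⟨a, b, hM⟩ := hg
      rw [hM, Matrix.trace_fin_two_of] at htr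
      rw [hM, Matrix.det_fin_two_of] at hdt
      show IsSquare ((Matrix.trace γ ^ 2 - 4) / (ε * ϖ))
      refine ⟨2 * b, ?_⟩
      rw [div_eq_iff (mul_ne_zero hε0 hϖ0), ← htr]
      linear_combination 4 * hdt
  -- construction: the right square class lets us conjugate into torus `i`
  have con : ∀ i : Fin 4, IsSquare ((Matrix.trace γ ^ 2 - 4) / (![1, ε, ϖ, ε * ϖ] : Fin 4 → K) i) →
      ∃ g : GL (Fin 2) K,
      (↑g : Matrix (Fin 2) (Fin 2) K) * γ * (↑g⁻¹ : Matrix (Fin 2) (Fin 2) K)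
        ∈ (![{M | ∃ a d : K, M = !![a, 0; 0, d]},
            {M | ∃ a b : K, M = !![a, b; b * ε, a]},
            {M | ∃ a b : K, M = !![a, b; b * ϖ, a]},
            {M | ∃ a b : K, M = !![a, b; b * (ε * ϖ), a]}] :
              Fin 4 → Set (Matrix (Fin 2) (Fin 2) K)) i := by
    rintro i ⟨c, hc⟩
    rw [div_eq_iff (hθ0 i)] at hc
    fin_cases i
    · replace hc : Matrix.trace γ ^ 2 - 4 = c * c * 1 := hc
      rw [mul_one] at hc
      obtain ⟨g, hg⟩ := conj_into'
        (M := !![(Matrix.trace γ + c) / 2, 0; 0, (Matrix.trace γ - c) / 2]) hdet hD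
        (by rw [Matrix.det_fin_two_of]; field_simp; linear_combination hc)
        (by rw [Matrix.trace_fin_two_of]; field_simp; ring)
      exact ⟨g, (⟨(Matrix.trace γ + c) / 2, (Matrix.trace γ - c) / 2, hg⟩ :
        ∃ a d : K, _ = !![a, 0; 0, d])⟩
    · replace hc : Matrix.trace γ ^ 2 - 4 = c * c * ε := hc
      obtain ⟨g, hg⟩ := conj_into'
        (M := !![Matrix.trace γ / 2, c / 2; c / 2 * ε, Matrix.trace γ / 2]) hdet hD
        (by rw [Matrix.det_fin_two_of]; field_simp; linear_combination hc)
        (by rw [Matrix.trace_fin_two_of]; field_simp; ring)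
      exact ⟨g, (⟨Matrix.trace γ / 2, c / 2, hg⟩ : ∃ a b : K, _ = !![a, b; b * ε, a])⟩
    · replace hc : Matrix.trace γ ^ 2 - 4 = c * c * ϖ := hc
      obtain ⟨g, hg⟩ := conj_into'
        (M := !![Matrix.trace γ / 2, c / 2; c / 2 * ϖ, Matrix.trace γ / 2]) hdet hD
        (by rw [Matrix.det_fin_two_of]; field_simp; linear_combination hc)
        (by rw [Matrix.trace_fin_two_of]; field_simp; ring)
      exact ⟨g, (⟨Matrix.trace γ / 2, c / 2, hg⟩ : ∃ a b : K, _ = !![a, b; b * ϖ, a])⟩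
    · replace hc : Matrix.trace γ ^ 2 - 4 = c * c * (ε * ϖ) := hc
      obtain ⟨g, hg⟩ := conj_into'
        (M := !![Matrix.trace γ / 2, c / 2; c / 2 * (ε * ϖ), Matrix.trace γ / 2]) hdet hD
        (by rw [Matrix.det_fin_two_of]; field_simp; linear_combination hc)
        (by rw [Matrix.trace_fin_two_of]; field_simp; ring)
      exact ⟨g, (⟨Matrix.trace γ / 2, c / 2, hg⟩ : ∃ a b : K, _ = !![a, b; b * (ε * ϖ), a])⟩
  -- assemble the unique existence
  obtain ⟨θ₀, hmem, hsq0⟩ := hsq (Matrix.trace γ ^ 2 - 4) hD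
  simp only [Set.mem_insert_iff, Set.mem_singleton_iff] at hmem
  have hex : ∃ i : Fin 4, (![1, ε, ϖ, ε * ϖ] : Fin 4 → K) i = θ₀ := by
    rcases hmem with h | h | h | h
    exacts [⟨0, by rw [h]; rfl⟩, ⟨1, by rw [h]; rfl⟩, ⟨2, by rw [h]; rfl⟩, ⟨3, by rw [h]; rfl⟩]
  obtain ⟨i, hi⟩ := hex
  refine ⟨i, con i (by rw [hi]; exact hsq0), ?_⟩
  intro j hj
  have sj : IsSquare ((Matrix.trace γ ^ 2 - 4) / (![1, ε, ϖ, ε * ϖ] : Fin 4 → K) j) := inv j hj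
  have si : IsSquare ((Matrix.trace γ ^ 2 - 4) / (![1, ε, ϖ, ε * ϖ] : Fin 4 → K) i) := by
    rw [hi]; exact hsq0
  have hprod : IsSquare ((![1, ε, ϖ, ε * ϖ] : Fin 4 → K) j * (![1, ε, ϖ, ε * ϖ] : Fin 4 → K) i) :=
    sq_ratio' hD (hθ0 j) (hθ0 i) sj si
  fin_cases i <;> fin_cases j <;>
    first
      | rfl
      | exact absurd hprod Nεϖ
      | exact absurd hprod N01
      | exact absurd hprod N02
      | exact absurd hprod N03
      | exact absurd hprod N10
      | exact absurd hprod N20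
      | exact absurd hprod N30
      | exact absurd hprod N21
      | exact absurd hprod N13
      | exact absurd hprod N31
      | exact absurd hprod N23
      | exact absurd hprod N32
end
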